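/- arXiv:2202.07613 — 3 statements merged into one kernel-verified Lean document; each statement's English description precedes it below -/
import Mathlib

section
/- Let a = (a₁, …, a₂ₙ) be an even continued form with value x ∈ ℚ. Then the integer matrix β(a, 1) ∈ SL₂(ℤ) sends ∞ to x under its Möbius action; more precisely, writing v = β(a, 1) · (1, 0)ᵀ ∈ ℤ², one has v₂ ≠ 0 and v₁ / v₂ = x. -/
/-! σ₁^{-a} acts on ℚ ∪ {∞} as z ↦ a + z and σ₂^{b} as z ↦ 1/(b + 1/z), so the pair
σ₁^{-a₁}σ₂^{a₂} sends z to a₁ + 1/(a₂ + 1/z). Peeling off two entries at a time, β(a, 1) sends ∞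
to the continued fraction, provided no denominator met along the way vanishes; those denominators
are the tails a_j + 1/(a_{j+1} + ⋯) with j ≥ 2, which the sign conditions of an even continued
form keep at least 1 in absolute value. -/

open Matrix

/-- The generator σ₁ = σ₁(1) = [[1, −1], [0, 1]] of SL₂(ℤ). -/
def S1 : Matrix (Fin 2) (Fin 2) ℤ := !![1, -1; 0, 1]

/-- The generator σ₂ = σ₂(1) = [[1, 0], [1, 1]] of SL₂(ℤ). -/
def S2 : Matrix (Fin 2) (Fin 2) ℤ := !![1, 0; 1, 1]

/-- `betaInt a k` is the product of the first `k` alternating factors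
`σ₁^{-a 1} · σ₂^{a 2} · σ₁^{-a 3} ⋯` (indices start at 1), i.e. β(a, 1). -/
noncomputable def betaInt (a : ℕ → ℤ) : ℕ → Matrix (Fin 2) (Fin 2) ℤ
  | 0 => 1
  | k + 1 => betaInt a k *
      (if (k + 1) % 2 = 1 then S1 ^ (-(a (k + 1))) else S2 ^ (a (k + 1)))

/-- `a` (on indices 1,…,2n) is an even continued form: either `a₁ ≥ 0` and `aᵢ ≥ 1` for
`2 ≤ i ≤ 2n`, or `a₁ ≤ 0` and `aᵢ ≤ −1` for `2 ≤ i ≤ 2n`. -/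
def IsEvenForm (n : ℕ) (a : ℕ → ℤ) : Prop :=
  1 ≤ n ∧ ((0 ≤ a 1 ∧ ∀ i, 2 ≤ i → i ≤ 2 * n → 1 ≤ a i)
    ∨ (a 1 ≤ 0 ∧ ∀ i, 2 ≤ i → i ≤ 2 * n → a i ≤ -1))

/-- Value of the continued fraction `a i + 1/(a (i+1) + 1/(⋯ + 1/(a last)))`. -/
def cfVal (a : ℕ → ℤ) (last i : ℕ) : ℚ :=
  if last ≤ i then (a i : ℚ)
  else (a i : ℚ) + 1 / cfVal a last (i + 1)
termination_by last - i
decreasing_by omega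

theorem S1_zpow (k : ℤ) : S1 ^ k = !![1, -k; 0, 1] := by
  have hS1 : IsUnit S1.det := by simp [S1, det_fin_two_of]
  induction k using Int.induction_on with
  | zero => simp [one_fin_two]
  | succ k ih => rw [zpow_add_one hS1, ih]; simp [S1]
  | pred k ih =>
    rw [zpow_sub_one hS1, ih, inv_def, adjugate_fin_two]
    simp [S1, det_fin_two_of]

theorem S2_zpow (k : ℤ) : S2 ^ k = !![1, 0; k, 1] := by
  have hS2 : IsUnit S2.det := by simp [S2, det_fin_two_of]
  induction k using Int.induction_on with
  | zero => simp [one_fin_two]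
  | succ k ih => rw [zpow_add_one hS2, ih]; simp [S2]
  | pred k ih =>
    rw [zpow_sub_one hS2, ih, inv_def, adjugate_fin_two]
    simp [S2, det_fin_two_of]; ring

theorem S1_zpow_neg_S2_zpow_mulVec (a b : ℤ) (w : Fin 2 → ℤ) :
    (S1 ^ (-a) * S2 ^ b) *ᵥ w = ![w 0 + a * (b * w 0 + w 1), b * w 0 + w 1] := by
  ext i
  fin_cases i <;> simp [S1_zpow, S2_zpow, mulVec, dotProduct, Fin.sum_univ_two]
  ring

theorem betaInt_add_two (a : ℕ → ℤ) (k : ℕ) :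
    betaInt a (k + 2) = S1 ^ (-a 1) * S2 ^ a 2 * betaInt (fun j ↦ a (j + 2)) k := by
  induction k with
  | zero => simp [betaInt]
  | succ k ih =>
    rw [show k + 1 + 2 = k + 2 + 1 by omega, betaInt, ih, betaInt, mul_assoc,
      show k + 2 + 1 = k + 1 + 2 by omega, Nat.add_mod_right]

theorem cfVal_of_le {a : ℕ → ℤ} {last i : ℕ} (h : last ≤ i) : cfVal a last i = a i := by
  rw [cfVal, if_pos h]

theorem cfVal_of_lt {a : ℕ → ℤ} {last i : ℕ} (h : i < last) :
    cfVal a last i = a i + 1 / cfVal a last (i + 1) := by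
  rw [cfVal, if_neg h.not_ge]

theorem cfVal_add_two (a : ℕ → ℤ) (last i : ℕ) :
    cfVal a (last + 2) (i + 2) = cfVal (fun j ↦ a (j + 2)) last i := by
  rcases le_or_gt last i with h | h
  · rw [cfVal_of_le (by omega), cfVal_of_le h]
  · rw [cfVal_of_lt (by omega), cfVal_of_lt h, ← cfVal_add_two a last (i + 1)]
termination_by last - i

theorem cfVal_neg (a : ℕ → ℤ) (last i : ℕ) : cfVal (-a) last i = -cfVal a last i := by
  rcases le_or_gt last i with h | h
  · simp [cfVal_of_le h]
  · rw [cfVal_of_lt h, cfVal_of_lt h, cfVal_neg a last (i + 1)]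
    simp only [Pi.neg_apply, Int.cast_neg]
    ring
termination_by last - i

theorem one_le_cfVal {a : ℕ → ℤ} {last i : ℕ} (hi : i ≤ last)
    (ha : ∀ j, i ≤ j → j ≤ last → 1 ≤ a j) : 1 ≤ cfVal a last i := by
  have hai : (1 : ℚ) ≤ a i := by exact_mod_cast ha i le_rfl hi
  rcases le_or_gt last i with h | h
  · rwa [cfVal_of_le h]
  · have htail : 1 ≤ cfVal a last (i + 1) :=
      one_le_cfVal h fun j hj hjl ↦ ha j (by omega) hjl
    rw [cfVal_of_lt h]
    have : 0 < 1 / cfVal a last (i + 1) := by positivity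
    linarith
termination_by last - i

theorem ratio_S1_zpow_neg_S2_zpow_mulVec (a b : ℤ) (w : Fin 2 → ℤ) (hw : w 0 ≠ 0)
    (h : (b : ℚ) + w 1 / w 0 ≠ 0) :
    ((S1 ^ (-a) * S2 ^ b) *ᵥ w) 1 ≠ 0 ∧
      (((S1 ^ (-a) * S2 ^ b) *ᵥ w) 0 : ℚ) / (((S1 ^ (-a) * S2 ^ b) *ᵥ w) 1 : ℚ)
        = a + 1 / (b + w 1 / w 0) := by
  have hw' : (w 0 : ℚ) ≠ 0 := by exact_mod_cast hw
  have hden : (b : ℚ) * w 0 + w 1 ≠ 0 := by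
    contrapose! h; field_simp; linarith
  rw [S1_zpow_neg_S2_zpow_mulVec]
  refine ⟨by simpa using (by exact_mod_cast hden : b * w 0 + w 1 ≠ 0), ?_⟩
  have hcf : (b : ℚ) + w 1 / w 0 = (b * w 0 + w 1) / w 0 := by field_simp
  simp only [cons_val_zero, cons_val_one, Int.cast_add, Int.cast_mul, hcf, one_div_div]
  rw [add_div, mul_div_cancel_right₀ _ hden, add_comm]

theorem betaInt_mulVec_ratio_eq_cfVal {n : ℕ} (hn : 1 ≤ n) (a : ℕ → ℤ)
    (htail : ∀ j, 2 ≤ j → j ≤ 2 * n → cfVal a (2 * n) j ≠ 0) :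
    (betaInt a (2 * n) *ᵥ ![1, 0]) 1 ≠ 0 ∧
      ((betaInt a (2 * n) *ᵥ ![1, 0]) 0 : ℚ) / ((betaInt a (2 * n) *ᵥ ![1, 0]) 1 : ℚ)
        = cfVal a (2 * n) 1 := by
  induction n, hn using Nat.le_induction generalizing a with
  | base =>
    have h2 : cfVal a 2 2 = a 2 := cfVal_of_le le_rfl
    have h1 : cfVal a 2 1 = a 1 + 1 / a 2 := by rw [cfVal_of_lt one_lt_two, h2]
    rw [betaInt_add_two a 0, betaInt, mul_one, h1]
    have ha2 : (a 2 : ℚ) + (![1, 0] : Fin 2 → ℤ) 1 / (![1, 0] : Fin 2 → ℤ) 0 ≠ 0 := by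
      simpa [h2] using htail 2 le_rfl le_rfl
    simpa using ratio_S1_zpow_neg_S2_zpow_mulVec (a 1) (a 2) ![1, 0] one_ne_zero ha2
  | succ n hn ih =>
    rw [show 2 * (n + 1) = 2 * n + 2 by ring] at htail ⊢
    set a' : ℕ → ℤ := fun j ↦ a (j + 2)
    set w := betaInt a' (2 * n) *ᵥ ![1, 0]
    have htail' : ∀ j, 2 ≤ j → j ≤ 2 * n → cfVal a' (2 * n) j ≠ 0 := fun j hj hjn ↦ by
      rw [← cfVal_add_two]; exact htail (j + 2) (by omega) (by omega)
    obtain ⟨-, hw⟩ : w 1 ≠ 0 ∧ (w 0 : ℚ) / w 1 = cfVal a (2 * n + 2) 3 :=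
      cfVal_add_two a (2 * n) 1 ▸ ih a' htail'
    have hw0 : w 0 ≠ 0 := by
      rintro h
      apply htail 3 (by omega) (by omega)
      rw [← hw, h, Int.cast_zero, zero_div]
    have hc2 : cfVal a (2 * n + 2) 2 = a 2 + (w 1 : ℚ) / w 0 := by
      rw [cfVal_of_lt (by omega), ← hw, one_div_div]
    have hc1 : cfVal a (2 * n + 2) 1 = a 1 + 1 / (a 2 + (w 1 : ℚ) / w 0) := by
      rw [cfVal_of_lt (by omega), hc2]
    rw [betaInt_add_two, ← mulVec_mulVec, hc1]
    exact ratio_S1_zpow_neg_S2_zpow_mulVec (a 1) (a 2) w hw0 (hc2 ▸ htail 2 le_rfl (by omega))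

theorem IsEvenForm.cfVal_ne_zero {n : ℕ} {a : ℕ → ℤ} (h : IsEvenForm n a) {j : ℕ} (hj : 2 ≤ j)
    (hjn : j ≤ 2 * n) : cfVal a (2 * n) j ≠ 0 := by
  rcases h.2 with ⟨-, hpos⟩ | ⟨-, hneg⟩
  · have := one_le_cfVal hjn fun i hi hin ↦ hpos i (by omega) hin
    positivity
  · have := one_le_cfVal (a := -a) hjn fun i hi hin ↦ by
      simpa using neg_le_neg (hneg i (by omega) hin)
    rw [cfVal_neg] at this
    linarith

/-- if `a` is an even continued form with value x ∈ ℚ, then the integer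
matrix β(a, 1) sends ∞ to x under its Möbius action: for v = β(a, 1)·(1, 0)ᵀ ∈ ℤ²
one has v₂ ≠ 0 and v₁ / v₂ = x. -/
theorem betaInt_maps_infty_to_value (n : ℕ) (a : ℕ → ℤ) (x : ℚ)
    (hform : IsEvenForm n a) (hval : cfVal a (2 * n) 1 = x) :
    (betaInt a (2 * n) *ᵥ ![1, 0]) 1 ≠ 0 ∧
      ((betaInt a (2 * n) *ᵥ ![1, 0]) 0 : ℚ) / ((betaInt a (2 * n) *ᵥ ![1, 0]) 1 : ℚ) = x :=
  hval ▸ betaInt_mulVec_ratio_eq_cfVal hform.1 a fun _ ↦ hform.cfVal_ne_zero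
end

section
/- q-deformed SSS congruence: let q > 0 and let z₁, z₂, z₁′, z₂′ ∈ U with φ(z₁) ≤ φ(z₂) and φ(z₁′) ≤ φ(z₂′). If ℓ_q(z₁) = ℓ_q(z₁′), ℓ_q(z₂) = ℓ_q(z₂′), and ℓ_q(z₁ + z₂) = ℓ_q(z₁′ + z₂′), then z₂ · z₁′ = z₂′ · z₁ (equivalently z₂/z₁ = z₂′/z₁′, so the triangles with vertices (0, z₁, z₁ + z₂) and (0, z₁′, z₁′ + z₂′) are related by the spiral similarity sending z₁ to z₁′). -/
/-- Membership in U = { z : Im z > 0 } ∪ { z real, z > 0 }. -/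
def InUpperU (z : ℂ) : Prop := 0 < z.im ∨ (z.im = 0 ∧ 0 < z.re)

/-- The phase φ(z) = Arg(z)/π of a complex number. -/
noncomputable def phase (z : ℂ) : ℝ := z.arg / Real.pi

/-- The q-deformed length ℓ_q(z) = q^{φ(z)} · |z|. -/
noncomputable def qLen (q : ℝ) (z : ℂ) : ℝ := q ^ phase z * ‖z‖

/-!
With `α = log q / π` put `L z = log ‖z‖ + α arg z = Re ((1 - α i) log z)`, so that `ℓ_q = exp ∘ L`
and `L` is additive on products whose arguments add up without wrapping around. The shape
`w = z₂ / z₁` of the triangle lies in `U`, and `L w = L z₂ - L z₁`, `L (1 + w) = L (z₁ + z₂) - L z₁`;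
so the hypotheses say that `L w = L w'` and `L (1 + w) = L (1 + w')`. In `U` the level set `L = d`
is the spiral `θ ↦ exp (d + (i - α) θ)`, `0 ≤ θ < π`, along which `L (1 + w)` is strictly
decreasing, with derivative `-(1 + α²) Im (w / (1 + w)) < 0`. Hence `w = w'`.
-/

open Complex Set
open scoped Real

noncomputable def logLen (α : ℝ) (z : ℂ) : ℝ := ((1 - α * I) * log z).re

lemma logLen_eq (α : ℝ) (z : ℂ) : logLen α z = Real.log ‖z‖ + α * z.arg := by
  simp [logLen, mul_re, log_re, log_im]

lemma qLen_eq_exp_logLen {q : ℝ} (hq : 0 < q) {z : ℂ} (hz : z ≠ 0) :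
    qLen q z = Real.exp (logLen (Real.log q / π) z) := by
  rw [logLen_eq, Real.exp_add, Real.exp_log (norm_pos_iff.2 hz), qLen, phase,
    Real.rpow_def_of_pos hq]
  ring_nf

lemma logLen_mul (α : ℝ) {a b : ℂ} (ha : a ≠ 0) (hb : b ≠ 0) (h : (a * b).arg = a.arg + b.arg) :
    logLen α (a * b) = logLen α a + logLen α b := by
  simp only [logLen_eq, norm_mul, Real.log_mul (norm_ne_zero_iff.2 ha) (norm_ne_zero_iff.2 hb), h]
  ring

lemma arg_div_eq_sub_arg_iff {x y : ℂ} (hx : x ≠ 0) (hy : y ≠ 0) :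
    (x / y).arg = x.arg - y.arg ↔ x.arg - y.arg ∈ Ioc (-π) π := by
  rw [← arg_coe_angle_toReal_eq_arg, arg_div_coe_angle hx hy, ← Real.Angle.coe_sub,
    Real.Angle.toReal_coe_eq_self_iff_mem_Ioc]

lemma inUpperU_iff_arg {z : ℂ} : InUpperU z ↔ z ≠ 0 ∧ z.arg ∈ Ico 0 π := by
  rw [InUpperU, mem_Ico, arg_nonneg_iff, arg_lt_pi_iff, ne_eq, Complex.ext_iff, zero_re, zero_im]
  grind

lemma inUpperU_one : InUpperU 1 := Or.inr ⟨one_im, one_pos⟩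

namespace InUpperU

variable {a b : ℂ}

lemma ne_zero (h : InUpperU a) : a ≠ 0 := (inUpperU_iff_arg.1 h).1

lemma add (ha : InUpperU a) (hb : InUpperU b) : InUpperU (a + b) := by
  rw [InUpperU, add_im, add_re]
  rcases ha with ha | ⟨ha, ha'⟩ <;> rcases hb with hb | ⟨hb, hb'⟩ <;>
    first | exact Or.inl (by linarith) | exact Or.inr ⟨by linarith, by linarith⟩

lemma mem_slitPlane (h : InUpperU a) : a ∈ slitPlane := by
  rcases h with h | ⟨_, h⟩
  · exact Or.inr h.ne'
  · exact Or.inl h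

lemma arg_mul (ha : InUpperU a) (hb : InUpperU b) (hab : InUpperU (a * b)) :
    (a * b).arg = a.arg + b.arg := by
  obtain ⟨ha₀, ha₁, ha₂⟩ := inUpperU_iff_arg.1 ha
  obtain ⟨hb₀, hb₁, hb₂⟩ := inUpperU_iff_arg.1 hb
  obtain ⟨-, hab₁, hab₂⟩ := inUpperU_iff_arg.1 hab
  have h := arg_mul_coe_angle ha₀ hb₀
  rw [← Real.Angle.coe_add] at h
  have : Fact (0 < 2 * π) := ⟨Real.two_pi_pos⟩
  exact (AddCircle.coe_eq_coe_iff_of_mem_Ico (a := 0) (p := 2 * π)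
    ⟨hab₁, by linarith⟩ ⟨by linarith, by linarith⟩).1 h

lemma div (ha : InUpperU a) (hb : InUpperU b) (h : a.arg ≤ b.arg) : InUpperU (b / a) := by
  obtain ⟨ha₀, ha₁, ha₂⟩ := inUpperU_iff_arg.1 ha
  obtain ⟨hb₀, hb₁, hb₂⟩ := inUpperU_iff_arg.1 hb
  have hdiv := (arg_div_eq_sub_arg_iff hb₀ ha₀).2 ⟨by linarith, by linarith⟩
  exact inUpperU_iff_arg.2 ⟨div_ne_zero hb₀ ha₀, by rw [hdiv]; constructor <;> linarith⟩

end InUpperU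

lemma logLen_ratio (α : ℝ) {z₁ z₂ : ℂ} (h₁ : InUpperU z₁) (h₂ : InUpperU z₂)
    (hφ : phase z₁ ≤ phase z₂) :
    InUpperU (z₂ / z₁) ∧ logLen α (z₂ / z₁) = logLen α z₂ - logLen α z₁ ∧
      logLen α (1 + z₂ / z₁) = logLen α (z₁ + z₂) - logLen α z₁ := by
  have hw := h₁.div h₂ ((div_le_div_iff_of_pos_right Real.pi_pos).1 hφ)
  have hw₁ := inUpperU_one.add hw
  have hz₂ : z₁ * (z₂ / z₁) = z₂ := mul_div_cancel₀ z₂ h₁.ne_zero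
  have hz₁₂ : z₁ * (1 + z₂ / z₁) = z₁ + z₂ := by rw [mul_add, mul_one, hz₂]
  refine ⟨hw, ?_, ?_⟩
  · have hmul := logLen_mul α h₁.ne_zero hw.ne_zero (h₁.arg_mul hw (by rwa [hz₂]))
    rw [hz₂] at hmul
    linarith
  · have hmul := logLen_mul α h₁.ne_zero hw₁.ne_zero
      (h₁.arg_mul hw₁ (by rw [hz₁₂]; exact h₁.add h₂))
    rw [hz₁₂] at hmul
    linarith

noncomputable def spiral (α d θ : ℝ) : ℂ := exp (d + (I - α) * θ)

lemma eq_spiral (α : ℝ) {z : ℂ} (hz : z ≠ 0) : z = spiral α (logLen α z) z.arg := by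
  conv_lhs => rw [← exp_log hz]
  congr 1
  apply Complex.ext <;> simp [logLen_eq, log_re, log_im]

lemma spiral_re (α d θ : ℝ) : (spiral α d θ).re = Real.exp (d - α * θ) * Real.cos θ := by
  simp [spiral, exp_re, sub_eq_add_neg]

lemma spiral_im (α d θ : ℝ) : (spiral α d θ).im = Real.exp (d - α * θ) * Real.sin θ := by
  simp [spiral, exp_im, sub_eq_add_neg]

lemma hasDerivAt_spiral (α d θ : ℝ) :
    HasDerivAt (spiral α d) ((I - α) * spiral α d θ) θ := by
  have h : HasDerivAt (fun t : ℝ => (d : ℂ) + (I - α) * t) (I - α) θ := by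
    simpa using ((hasDerivAt_id θ).ofReal_comp.const_mul (I - α)).const_add (d : ℂ)
  rw [mul_comm]
  exact h.cexp

lemma inUpperU_spiral (α d : ℝ) {θ : ℝ} (hθ : θ ∈ Ico 0 π) : InUpperU (spiral α d θ) := by
  rcases hθ.1.eq_or_lt with rfl | h₀
  · exact Or.inr ⟨by simp [spiral_im], by simp [spiral_re, Real.exp_pos]⟩
  · exact Or.inl (spiral_im α d θ ▸ mul_pos (Real.exp_pos _) (Real.sin_pos_of_pos_of_lt_pi h₀ hθ.2))

lemma im_div_one_add_pos {w : ℂ} (hw : 0 < w.im) : 0 < (w / (1 + w)).im := by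
  have hN : 0 < normSq (1 + w) := normSq_pos.2 fun h => by
    have := congrArg im h
    simp only [add_im, one_im, zero_im] at this
    linarith
  have : (w / (1 + w)).im = w.im / normSq (1 + w) := by
    rw [div_im, add_re, add_im, one_re, one_im]
    ring
  exact this ▸ div_pos hw hN

lemma hasDerivAt_logLen_one_add_spiral (α d θ : ℝ) (hθ : 1 + spiral α d θ ∈ slitPlane) :
    HasDerivAt (fun t => logLen α (1 + spiral α d t))
      (-(1 + α ^ 2) * (spiral α d θ / (1 + spiral α d θ)).im) θ := by
  have h := (((hasDerivAt_spiral α d θ).const_add 1).clog_real hθ).const_mul (1 - α * I)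
  have hre := reCLM.hasFDerivAt.comp_hasDerivAt θ h
  refine hre.congr_deriv ?_
  have hprod : (1 - α * I) * (I - α) = ((1 + α ^ 2 : ℝ) : ℂ) * I := by
    push_cast
    ring_nf
    rw [I_sq]
    ring
  rw [reCLM_apply, mul_div_assoc, ← mul_assoc, hprod, mul_assoc, re_ofReal_mul, I_mul_re]
  ring

lemma strictAntiOn_logLen_one_add_spiral (α d : ℝ) :
    StrictAntiOn (fun θ => logLen α (1 + spiral α d θ)) (Ico 0 π) := by
  have hderiv : ∀ θ ∈ Ico 0 π, _ := fun θ hθ =>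
    hasDerivAt_logLen_one_add_spiral α d θ (inUpperU_one.add (inUpperU_spiral α d hθ)).mem_slitPlane
  refine strictAntiOn_of_deriv_neg (convex_Ico 0 π)
    (fun θ hθ => (hderiv θ hθ).continuousAt.continuousWithinAt) fun θ hθ => ?_
  rw [interior_Ico] at hθ
  rw [(hderiv θ (Ioo_subset_Ico_self hθ)).deriv]
  have him : 0 < (spiral α d θ).im :=
    spiral_im α d θ ▸ mul_pos (Real.exp_pos _) (Real.sin_pos_of_pos_of_lt_pi hθ.1 hθ.2)
  exact mul_neg_of_neg_of_pos (by nlinarith [sq_nonneg α]) (im_div_one_add_pos him)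

lemma eq_of_logLen_eq_of_logLen_one_add_eq (α : ℝ) {w w' : ℂ} (hw : InUpperU w)
    (hw' : InUpperU w') (h : logLen α w = logLen α w')
    (h₁ : logLen α (1 + w) = logLen α (1 + w')) : w = w' := by
  obtain ⟨hw₀, hwarg⟩ := inUpperU_iff_arg.1 hw
  obtain ⟨hw₀', hwarg'⟩ := inUpperU_iff_arg.1 hw'
  have harg : w.arg = w'.arg := by
    refine (strictAntiOn_logLen_one_add_spiral α (logLen α w)).injOn hwarg hwarg' ?_
    rw [← eq_spiral α hw₀, h, ← eq_spiral α hw₀', h₁]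
  calc w = spiral α (logLen α w) w.arg := eq_spiral α hw₀
    _ = spiral α (logLen α w') w'.arg := by rw [h, harg]
    _ = w' := (eq_spiral α hw₀').symm

/-- q-deformed SSS congruence: for q > 0 and z₁, z₂, z₁′, z₂′ ∈ U with
φ(z₁) ≤ φ(z₂) and φ(z₁′) ≤ φ(z₂′), if ℓ_q(z₁) = ℓ_q(z₁′), ℓ_q(z₂) = ℓ_q(z₂′) and
ℓ_q(z₁ + z₂) = ℓ_q(z₁′ + z₂′), then z₂·z₁′ = z₂′·z₁ (i.e. the two triangles are related
by the spiral similarity sending z₁ to z₁′). -/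
theorem q_SSS_congruence (q : ℝ) (hq : 0 < q) (z₁ z₂ z₁' z₂' : ℂ)
    (h₁ : InUpperU z₁) (h₂ : InUpperU z₂) (h₁' : InUpperU z₁') (h₂' : InUpperU z₂')
    (hφ : phase z₁ ≤ phase z₂) (hφ' : phase z₁' ≤ phase z₂')
    (e₁ : qLen q z₁ = qLen q z₁') (e₂ : qLen q z₂ = qLen q z₂')
    (e₁₂ : qLen q (z₁ + z₂) = qLen q (z₁' + z₂')) :
    z₂ * z₁' = z₂' * z₁ := by
  set α := Real.log q / π
  have hlog {z z' : ℂ} (hz : InUpperU z) (hz' : InUpperU z') (h : qLen q z = qLen q z') :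
      logLen α z = logLen α z' := by
    rwa [qLen_eq_exp_logLen hq hz.ne_zero, qLen_eq_exp_logLen hq hz'.ne_zero,
      Real.exp_eq_exp] at h
  obtain ⟨hw, hlw, hlw₁⟩ := logLen_ratio α h₁ h₂ hφ
  obtain ⟨hw', hlw', hlw₁'⟩ := logLen_ratio α h₁' h₂' hφ'
  have hratio : z₂ / z₁ = z₂' / z₁' := by
    refine eq_of_logLen_eq_of_logLen_one_add_eq α hw hw' ?_ ?_
    · rw [hlw, hlw', hlog h₁ h₁' e₁, hlog h₂ h₂' e₂]
    · rw [hlw₁, hlw₁', hlog h₁ h₁' e₁, hlog (h₁.add h₂) (h₁'.add h₂') e₁₂]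
  rwa [div_eq_div_iff h₁.ne_zero h₁'.ne_zero] at hratio
end

section
/- Strict monotonicity of the q-deformed opposite-side function: let q > 0 and c > 0, and define T : [0, 1] → ℝ by T(t) := q^{Arg(1 + c·q^{−t}·e^{iπt})/π} · |1 + c·q^{−t}·e^{iπt}|, where Arg is the principal argument of a complex number (with the convention Arg 0 = 0). Then T is strictly decreasing on [0, 1]; in particular T is injective on [0, 1]. -/
/-!
Write `w t = 1 + c·exp(t(πi − log q))` (the complex number in the definition of `oppositeSide`)
and `s = 1 − i·log q/π`. Then `q ^ (arg w / π) · ‖w‖ = ‖w ^ s‖`, and `w` stays in the closed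
upper half plane, where `z ↦ z ^ s` is continuous, so `T` is continuous on `[0, 1]`. On `(0, 1)`,
`log T = Re (s · log w)` has derivative `Re (s(πi − log q)(1 − 1/w))`, and
`s(πi − log q) = πi(1 + (log q/π)²)`, so the derivative is `−π(1 + (log q/π)²) · Im w / |w|² < 0`.
-/

open Complex Set Filter Topology
open scoped Real

/-- The q-deformed length of the side opposite the angle πt in a triangle with sides 1
and c·q^{−t} enclosing the angle πt:
T(t) = q^{Arg(1 + c·q^{−t}·e^{iπt})/π} · |1 + c·q^{−t}·e^{iπt}|. -/
noncomputable def oppositeSide (q c t : ℝ) : ℝ :=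
  q ^ ((1 + (↑(c * q ^ (-t)) : ℂ) * Complex.exp (Real.pi * t * Complex.I)).arg / Real.pi) *
    ‖(1 + (↑(c * q ^ (-t)) : ℂ) * Complex.exp (Real.pi * t * Complex.I))‖

lemma continuousOn_cpow_const_of_im_nonneg {s : ℂ} (hs : 0 < s.re) :
    ContinuousOn (fun z : ℂ => z ^ s) {z | 0 ≤ z.im} := by
  intro z _
  by_cases h : 0 ≤ z.re ∨ z.im ≠ 0
  · exact (continuousAt_cpow_const_of_re_pos h hs).continuousWithinAt
  push Not at h
  have hz0 : z ≠ 0 := fun h0 => by simp [h0] at h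
  have hexp : ContinuousWithinAt (fun x => cexp (Complex.log x * s)) {z | 0 ≤ z.im} z :=
    ((continuousWithinAt_log_of_re_neg_of_im_zero h.1 h.2).mul continuousWithinAt_const).cexp
  refine hexp.congr_of_eventuallyEq ?_ (cpow_def_of_ne_zero hz0 s)
  filter_upwards [nhdsWithin_le_nhds (eventually_ne_nhds hz0)] with x hx
  exact cpow_def_of_ne_zero hx s

lemma rpow_arg_div_pi_mul_norm {q : ℝ} (hq : 0 < q) (z : ℂ) :
    q ^ (arg z / π) * ‖z‖ = ‖z ^ (1 - ↑(Real.log q / π) * I)‖ := by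
  rcases eq_or_ne z 0 with rfl | hz
  · rw [zero_cpow (fun h => by simpa using congrArg re h)]
    simp
  rw [norm_cpow_of_ne_zero hz, Real.rpow_def_of_pos hq]
  simp only [sub_re, one_re, mul_re, ofReal_re, I_re, ofReal_im, I_im, sub_im, one_im, mul_im,
    mul_zero, sub_zero, mul_one, add_zero, zero_sub, Real.rpow_one, div_eq_mul_inv,
    ← Real.exp_neg]
  ring_nf

lemma HasDerivAt.norm_cpow_const {w : ℝ → ℂ} {w' s : ℂ} {t : ℝ} (hw : HasDerivAt w w' t)
    (ht : w t ∈ slitPlane) :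
    HasDerivAt (fun u => ‖w u ^ s‖) (‖w t ^ s‖ * (w' / w t * s).re) t := by
  have hlog : HasDerivAt (fun u => (Complex.log (w u) * s).re) (w' / w t * s).re t :=
    reCLM.hasFDerivAt.comp_hasDerivAt t ((hw.clog_real ht).mul_const s)
  have hnorm : ∀ u, w u ≠ 0 → ‖w u ^ s‖ = Real.exp (Complex.log (w u) * s).re := fun u hu => by
    rw [cpow_def_of_ne_zero hu, norm_exp]
  rw [hnorm t (slitPlane_ne_zero ht)]
  refine hlog.exp.congr_of_eventuallyEq ?_
  filter_upwards [hw.continuousAt.eventually_ne (slitPlane_ne_zero ht)] with u hu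
  exact hnorm u hu

lemma re_mul_I_mul_sub_one_div_neg {r : ℝ} (hr : 0 < r) {z : ℂ} (hz : 0 < z.im) :
    (r * I * ((z - 1) / z)).re < 0 := by
  have hz0 : z ≠ 0 := fun h => by simp [h] at hz
  rw [sub_div, div_self hz0, one_div]
  simp only [mul_re, mul_im, ofReal_re, ofReal_im, I_re, I_im, sub_re, sub_im, one_re, one_im,
    inv_im, neg_div]
  have : 0 < z.im / normSq z := div_pos hz (normSq_pos.2 hz0)
  nlinarith

noncomputable def sideVector (q c t : ℝ) : ℂ := 1 + c * cexp (t * (π * I - Real.log q))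

lemma sideVector_eq {q : ℝ} (hq : 0 < q) (c t : ℝ) :
    sideVector q c t = 1 + (↑(c * q ^ (-t)) : ℂ) * cexp (π * t * I) := by
  rw [sideVector, Real.rpow_def_of_pos hq]
  push_cast
  rw [mul_assoc, ← Complex.exp_add]
  ring_nf

lemma oppositeSide_eq_norm_cpow {q : ℝ} (hq : 0 < q) (c t : ℝ) :
    oppositeSide q c t = ‖sideVector q c t ^ (1 - ↑(Real.log q / π) * I)‖ := by
  rw [oppositeSide, ← sideVector_eq hq, rpow_arg_div_pi_mul_norm hq]

lemma sideVector_im {q : ℝ} (hq : 0 < q) (c t : ℝ) :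
    (sideVector q c t).im = c * q ^ (-t) * Real.sin (π * t) := by
  rw [sideVector_eq hq]
  simp [exp_mul_I, ← ofReal_mul, ← ofReal_sin, ← ofReal_cos, mul_im]

lemma sideVector_hasDerivAt (q c t : ℝ) :
    HasDerivAt (sideVector q c) ((sideVector q c t - 1) * (π * I - Real.log q)) t := by
  have h := ((ofRealCLM.hasDerivAt (x := t)).mul_const (π * I - Real.log q)).cexp
    |>.const_mul (c : ℂ) |>.const_add 1
  refine h.congr_deriv ?_
  simp only [sideVector, ofRealCLM_apply, ofReal_one, one_mul]
  ring

lemma sideVector_continuous (q c : ℝ) : Continuous (sideVector q c) :=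
  continuous_iff_continuousAt.2 fun t => (sideVector_hasDerivAt q c t).continuousAt

lemma sideVector_im_nonneg {q c t : ℝ} (hq : 0 < q) (hc : 0 < c) (ht : t ∈ Icc 0 1) :
    0 ≤ (sideVector q c t).im := by
  rw [sideVector_im hq]
  have := Real.sin_nonneg_of_nonneg_of_le_pi (by nlinarith [ht.1, Real.pi_pos])
    (by nlinarith [ht.2, Real.pi_pos] : π * t ≤ π)
  positivity

lemma sideVector_im_pos {q c t : ℝ} (hq : 0 < q) (hc : 0 < c) (ht : t ∈ Ioo 0 1) :
    0 < (sideVector q c t).im := by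
  rw [sideVector_im hq]
  have := Real.sin_pos_of_pos_of_lt_pi (by nlinarith [ht.1, Real.pi_pos])
    (by nlinarith [ht.2, Real.pi_pos] : π * t < π)
  positivity

lemma deriv_norm_sideVector_cpow_neg {q c t : ℝ} (hq : 0 < q) (hc : 0 < c) (ht : t ∈ Ioo 0 1) :
    deriv (fun u => ‖sideVector q c u ^ (1 - ↑(Real.log q / π) * I)‖) t < 0 := by
  have him : 0 < (sideVector q c t).im := sideVector_im_pos hq hc ht
  have hslit : sideVector q c t ∈ slitPlane := mem_slitPlane_iff.2 (Or.inr him.ne')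
  rw [((sideVector_hasDerivAt q c t).norm_cpow_const hslit).deriv]
  refine mul_neg_of_pos_of_neg (norm_pos_iff.2 (cpow_ne_zero_iff.2 (Or.inl
    (slitPlane_ne_zero hslit)))) ?_
  set w := sideVector q c t
  set l := Real.log q / π
  have hlog : (Real.log q : ℂ) = π * l := by
    simp only [l, ofReal_div]
    field_simp
  have hfactor : (w - 1) * (π * I - Real.log q) / w * (1 - l * I)
      = ((π * (1 + l ^ 2) : ℝ) : ℂ) * I * ((w - 1) / w) := by
    rw [hlog]
    push_cast
    linear_combination (-(w - 1) / w * π * l) * I_sq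
  rw [hfactor]
  exact re_mul_I_mul_sub_one_div_neg (by positivity) him

/-- for q > 0 and c > 0, the function T is strictly decreasing on [0, 1];
in particular it is injective on [0, 1]. -/
theorem oppositeSide_strictAntiOn (q c : ℝ) (hq : 0 < q) (hc : 0 < c) :
    StrictAntiOn (oppositeSide q c) (Set.Icc 0 1) ∧
      Set.InjOn (oppositeSide q c) (Set.Icc 0 1) := by
  have hcont : ContinuousOn (fun t => sideVector q c t ^ (1 - ↑(Real.log q / π) * I))
      (Icc 0 1) :=
    (continuousOn_cpow_const_of_im_nonneg (by simp)).comp (sideVector_continuous q c).continuousOn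
      fun t ht => sideVector_im_nonneg hq hc ht
  have hanti : StrictAntiOn (oppositeSide q c) (Icc 0 1) := by
    rw [funext (oppositeSide_eq_norm_cpow hq c)]
    refine strictAntiOn_of_deriv_neg (convex_Icc 0 1) hcont.norm fun t ht => ?_
    rw [interior_Icc] at ht
    exact deriv_norm_sideVector_cpow_neg hq hc ht
  exact ⟨hanti, hanti.injOn⟩
end
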